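/- Let A, B, M₁, M₂ be n × n complex matrices, let Γ be the circle of radius r > 0 centered at c ∈ ℂ, and set ΔM = M₂ − M₁. Assume Bz − A − M₁ is invertible for every z ∈ Γ with R₁ = sup_{z ∈ Γ} ‖(Bz − A − M₁)⁻¹‖ < ∞, and assume ‖ΔM‖ · R₁ < 1. Then Bz − A − M₂ is invertible for every z ∈ Γ, the Riesz projections P_i = (1/(2πi)) ∮_Γ (Bz − A − M_i)⁻¹ B dz are well defined, and ‖P₁ − P₂‖ ≤ r · R₁² · ‖ΔM‖ · ‖B‖ / (1 − R₁ ‖ΔM‖). In particular the map from the perturbation matrix to the Riesz projection is Lipschitz continuous with a constant proportional to r R₁² ‖B‖ when R₁‖ΔM‖ is bounded away from 1. -/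

import Mathlib

open Matrix MeasureTheory

attribute [local instance] Matrix.normedAddCommGroup Matrix.normedSpace

/-- The spectral (operator) norm of a complex matrix, induced by the Euclidean
vector norm. -/
noncomputable def specNorm {m n : Type*} [Fintype m] [Fintype n] [DecidableEq n]
    (A : Matrix m n ℂ) : ℝ :=
  ‖LinearMap.toContinuousLinearMap (Matrix.toEuclideanLin A)‖

/-- The Riesz projection `(1/(2πi)) ∮_Γ (Bz − A − M)⁻¹ B dz` over the circle `Γ` of
radius `r` centered at `c`, parametrized as `z = c + r e^{iθ}`, `θ ∈ [0, 2π]`. -/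
noncomputable def rieszProj (n : ℕ) (A B M : Matrix (Fin n) (Fin n) ℂ) (c : ℂ) (r : ℝ) :
    Matrix (Fin n) (Fin n) ℂ :=
  (2 * Real.pi * Complex.I)⁻¹ •
    ∫ θ in (0:ℝ)..(2 * Real.pi),
      (Complex.I * (r : ℂ) * Complex.exp (θ * Complex.I)) •
        (((c + (r : ℂ) * Complex.exp (θ * Complex.I)) • B - A - M)⁻¹ * B)

/-!
Through `Matrix.toEuclideanCLM` the spectral norm becomes the operator norm of a Banach algebra,
where the argument is pointwise on `Γ`. With `x = z B - A - M₁` and `d = M₂ - M₁` we have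
`‖x⁻¹‖ ≤ R₁`, so `x - d = x (1 - x⁻¹ d)` is invertible by the Neumann series, and the resolvent
identity `x⁻¹ - (x - d)⁻¹ = -x⁻¹ d (x - d)⁻¹` gives `e ≤ R₁ ‖d‖ (R₁ + e)` for
`e = ‖x⁻¹ - (x - d)⁻¹‖`, i.e. `e ≤ R₁² ‖d‖ / (1 - R₁ ‖d‖)`. Integrating over `Γ`, of length `2πr`,
and dividing by `2π` gives the bound.
-/

open Metric
open scoped Ring Real

section BanachAlgebra

variable {𝔸 : Type*} [NormedRing 𝔸] [HasSummableGeomSeries 𝔸]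

theorem IsUnit.sub_of_norm_mul_lt {x d : 𝔸} {ρ : ℝ} (hx : IsUnit x) (hρ : ‖x⁻¹ʳ‖ ≤ ρ)
    (hd : ‖d‖ * ρ < 1) : IsUnit (x - d) := by
  have hsmall : ‖x⁻¹ʳ * d‖ < 1 := by
    calc ‖x⁻¹ʳ * d‖ ≤ ‖x⁻¹ʳ‖ * ‖d‖ := norm_mul_le _ _
      _ ≤ ρ * ‖d‖ := by gcongr
      _ < 1 := by linarith
  have hfactor : x - d = x * (1 - x⁻¹ʳ * d) := by
    rw [mul_sub, mul_one, Ring.mul_inverse_cancel_left x d hx]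
  rw [hfactor]
  exact hx.mul (isUnit_one_sub_of_norm_lt_one hsmall)

theorem norm_inverse_sub_inverse_sub_le {x d : 𝔸} {ρ : ℝ} (hx : IsUnit x)
    (hρ : ‖x⁻¹ʳ‖ ≤ ρ) (hd : ‖d‖ * ρ < 1) :
    ‖x⁻¹ʳ - (x - d)⁻¹ʳ‖ ≤ ρ ^ 2 * ‖d‖ / (1 - ‖d‖ * ρ) := by
  set e := ‖x⁻¹ʳ - (x - d)⁻¹ʳ‖
  have hρ0 : 0 ≤ ρ := (norm_nonneg _).trans hρ
  have hdiff : x⁻¹ʳ - (x - d)⁻¹ʳ = -(x⁻¹ʳ * d * (x - d)⁻¹ʳ) := by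
    rw [Ring.inverse_sub_inverse (iff_of_true hx (hx.sub_of_norm_mul_lt hρ hd)),
      sub_sub_cancel_left, mul_neg, neg_mul]
  have hself : e ≤ ‖d‖ * ρ * (ρ + e) := by
    calc e = ‖x⁻¹ʳ * d * (x - d)⁻¹ʳ‖ := by rw [← norm_neg, ← hdiff]
      _ ≤ ‖x⁻¹ʳ‖ * ‖d‖ * ‖(x - d)⁻¹ʳ‖ := norm_mul₃_le
      _ ≤ ρ * ‖d‖ * (ρ + e) := by
          gcongr
          calc ‖(x - d)⁻¹ʳ‖ = ‖x⁻¹ʳ - (x⁻¹ʳ - (x - d)⁻¹ʳ)‖ := by rw [sub_sub_cancel]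
            _ ≤ ‖x⁻¹ʳ‖ + e := norm_sub_le _ _
            _ ≤ ρ + e := by gcongr
      _ = ‖d‖ * ρ * (ρ + e) := by ring
  rw [le_div_iff₀ (by linarith)]
  nlinarith

theorem ContinuousOn.ringInverse {α : Type*} [TopologicalSpace α] {f : α → 𝔸} {s : Set α}
    (hf : ContinuousOn f s) (hunit : ∀ x ∈ s, IsUnit (f x)) :
    ContinuousOn (fun x => (f x)⁻¹ʳ) s := fun x hx => by
  have hinv := NormedRing.inverse_continuousAt (hunit x hx).unit
  rw [IsUnit.unit_spec] at hinv
  exact hinv.comp_continuousWithinAt (hf x hx)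

end BanachAlgebra

theorem norm_circleIntegral_inverse_mul_sub_le {𝔸 : Type*} [NormedRing 𝔸] [NormedSpace ℂ 𝔸]
    [CompleteSpace 𝔸] {f : ℂ → 𝔸} {b d : 𝔸} {c : ℂ} {r ρ : ℝ} (hr : 0 ≤ r)
    (hf : ContinuousOn f (sphere c r)) (hunit : ∀ z ∈ sphere c r, IsUnit (f z))
    (hρ : ∀ z ∈ sphere c r, ‖(f z)⁻¹ʳ‖ ≤ ρ) (hd : ‖d‖ * ρ < 1) :
    ‖(∮ z in C(c, r), (f z)⁻¹ʳ * b) - ∮ z in C(c, r), (f z - d)⁻¹ʳ * b‖ ≤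
      2 * π * r * (ρ ^ 2 * ‖d‖ / (1 - ‖d‖ * ρ) * ‖b‖) := by
  have hunit' : ∀ z ∈ sphere c r, IsUnit (f z - d) := fun z hz =>
    (hunit z hz).sub_of_norm_mul_lt (hρ z hz) hd
  have hint : CircleIntegrable (fun z => (f z)⁻¹ʳ * b) c r :=
    ((hf.ringInverse hunit).mul continuousOn_const).circleIntegrable hr
  have hint' : CircleIntegrable (fun z => (f z - d)⁻¹ʳ * b) c r :=
    (((hf.sub continuousOn_const).ringInverse hunit').mul continuousOn_const).circleIntegrable hr
  rw [← circleIntegral.integral_sub hint hint']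
  refine circleIntegral.norm_integral_le_of_norm_le_const hr fun z hz => ?_
  rw [← sub_mul]
  refine (norm_mul_le _ _).trans ?_
  gcongr
  exact norm_inverse_sub_inverse_sub_le (hunit z hz) (hρ z hz) hd

theorem map_ringInverse {M N F : Type*} [MonoidWithZero M] [MonoidWithZero N] [EquivLike F M N]
    [MulEquivClass F M N] (f : F) (x : M) : f x⁻¹ʳ = (f x)⁻¹ʳ := by
  by_cases hx : IsUnit x
  · calc f x⁻¹ʳ = (f x)⁻¹ʳ * (f x * f x⁻¹ʳ) :=
          (Ring.inverse_mul_cancel_left _ _ (hx.map f)).symm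
      _ = (f x)⁻¹ʳ := by rw [← map_mul, Ring.mul_inverse_cancel x hx, map_one, mul_one]
  · rw [Ring.inverse_non_unit x hx, Ring.inverse_non_unit _ ((MulEquiv.isUnit_map f).not.mpr hx),
      map_zero]

theorem ContinuousLinearEquiv.map_circleIntegral {E F : Type*} [NormedAddCommGroup E]
    [NormedSpace ℂ E] [CompleteSpace E] [NormedAddCommGroup F] [NormedSpace ℂ F] [CompleteSpace F]
    (L : E ≃L[ℂ] F) (f : ℂ → E) (c : ℂ) (r : ℝ) :
    L (∮ z in C(c, r), f z) = ∮ z in C(c, r), L (f z) := by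
  simp only [circleIntegral, intervalIntegral.integral_of_le Real.two_pi_pos.le,
    ← L.integral_comp_comm, map_smul]

local notation "Φ" => toEuclideanCLM (𝕜 := ℂ) (n := Fin _)

section Matrix

variable {n : ℕ}

theorem specNorm_eq_norm_toEuclideanCLM (A : Matrix (Fin n) (Fin n) ℂ) :
    specNorm A = ‖Φ A‖ :=
  rfl

theorem rieszProj_eq_circleIntegral (A B M : Matrix (Fin n) (Fin n) ℂ) (c : ℂ) (r : ℝ) :
    rieszProj n A B M c r = (2 * π * Complex.I)⁻¹ • ∮ z in C(c, r), (z • B - A - M)⁻¹ * B := by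
  simp only [rieszProj, circleIntegral, deriv_circleMap, circleMap, zero_add]
  congr 2 with θ
  ring_nf

noncomputable def toEuclideanCLMEquiv :
    Matrix (Fin n) (Fin n) ℂ ≃L[ℂ] (EuclideanSpace ℂ (Fin n) →L[ℂ] EuclideanSpace ℂ (Fin n)) :=
  (toEuclideanCLM (𝕜 := ℂ)).toAlgEquiv.toLinearEquiv.toContinuousLinearEquiv

theorem toEuclideanCLM_rieszProj (A B M : Matrix (Fin n) (Fin n) ℂ) (c : ℂ) (r : ℝ) :
    Φ (rieszProj n A B M c r) =
      (2 * π * Complex.I)⁻¹ • ∮ z in C(c, r), (Φ (z • B - A - M))⁻¹ʳ * Φ B := by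
  rw [rieszProj_eq_circleIntegral, map_smul]
  refine congrArg _ ((toEuclideanCLMEquiv.map_circleIntegral _ c r).trans ?_)
  congr 1 with z
  rw [nonsing_inv_eq_ringInverse, ← map_ringInverse, ← map_mul]
  rfl

end Matrix

/-- **Lipschitz stability of Riesz projections under a Neumann smallness condition.**
Let `A, B, M₁, M₂` be `n × n` complex matrices, `Γ` the circle of radius `r > 0` centered
at `c`, and `ΔM = M₂ − M₁`. Assume `Bz − A − M₁` is invertible for all `z ∈ Γ`, let
`R₁ = sup_{z ∈ Γ} ‖(Bz − A − M₁)⁻¹‖` (spectral norm), and assume `‖ΔM‖ · R₁ < 1`.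
Then `Bz − A − M₂` is invertible for every `z ∈ Γ` (so both Riesz projections
`Pᵢ = (1/(2πi)) ∮_Γ (Bz − A − Mᵢ)⁻¹ B dz` are well defined), and
`‖P₁ − P₂‖ ≤ r · R₁² · ‖ΔM‖ · ‖B‖ / (1 − R₁ ‖ΔM‖)`. -/
theorem riesz_projection_lipschitz (n : ℕ)
    (A B M₁ M₂ : Matrix (Fin n) (Fin n) ℂ) (c : ℂ) (r : ℝ) (hr : 0 < r)
    (h₁ : ∀ z ∈ Metric.sphere c r, IsUnit (z • B - A - M₁))
    (R₁ : ℝ)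
    (hR₁ : R₁ = sSup ((fun z => specNorm ((z • B - A - M₁)⁻¹)) '' Metric.sphere c r))
    (hsmall : specNorm (M₂ - M₁) * R₁ < 1) :
    (∀ z ∈ Metric.sphere c r, IsUnit (z • B - A - M₂)) ∧
      specNorm (rieszProj n A B M₁ c r - rieszProj n A B M₂ c r) ≤
        r * R₁ ^ 2 * specNorm (M₂ - M₁) * specNorm B / (1 - R₁ * specNorm (M₂ - M₁)) := by
  have hperturb : ∀ z : ℂ, Φ (z • B - A - M₂) = Φ (z • B - A - M₁) - Φ (M₂ - M₁) := fun z => by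
    simp only [map_sub]; abel
  have hcont : Continuous fun z : ℂ => Φ (z • B - A - M₁) := by
    simp only [map_sub, map_smul]; fun_prop
  have hunit : ∀ z ∈ sphere c r, IsUnit (Φ (z • B - A - M₁)) := fun z hz => (h₁ z hz).map _
  have hR : ∀ z ∈ sphere c r, ‖(Φ (z • B - A - M₁))⁻¹ʳ‖ ≤ R₁ := fun z hz => by
    simp only [specNorm_eq_norm_toEuclideanCLM, nonsing_inv_eq_ringInverse, map_ringInverse]
      at hR₁
    rw [hR₁]
    exact le_csSup ((isCompact_sphere c r).bddAbove_image
      (hcont.continuousOn.ringInverse hunit).norm) (Set.mem_image_of_mem _ hz)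
  refine ⟨fun z hz => ?_, ?_⟩
  · rw [← MulEquiv.isUnit_map Φ, hperturb]
    exact (hunit z hz).sub_of_norm_mul_lt (hR z hz) hsmall
  · have hΓ := norm_circleIntegral_inverse_mul_sub_le (b := Φ B) (d := Φ (M₂ - M₁)) hr.le
      hcont.continuousOn hunit hR hsmall
    have hdiff : Φ (rieszProj n A B M₁ c r - rieszProj n A B M₂ c r) =
        (2 * π * Complex.I)⁻¹ • ((∮ z in C(c, r), (Φ (z • B - A - M₁))⁻¹ʳ * Φ B) -
          ∮ z in C(c, r), (Φ (z • B - A - M₁) - Φ (M₂ - M₁))⁻¹ʳ * Φ B) := by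
      simp only [map_sub, toEuclideanCLM_rieszProj, smul_sub, hperturb]
    have hscale : ‖(2 * π * Complex.I)⁻¹‖ = (2 * π)⁻¹ := by
      simp [abs_of_pos Real.pi_pos]
    simp only [specNorm_eq_norm_toEuclideanCLM, hdiff, norm_smul, hscale]
    calc (2 * π)⁻¹ * ‖_‖ ≤ (2 * π)⁻¹ * (2 * π * r * (R₁ ^ 2 * ‖Φ (M₂ - M₁)‖ /
          (1 - ‖Φ (M₂ - M₁)‖ * R₁) * ‖Φ B‖)) := by gcongr
      _ = _ := by rw [mul_comm _ R₁]; field_simp
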